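/- Let f : ℝⁿ → ℝ be differentiable, x ∈ Ω, μ̄ > 0, x̄ ∈ prox_{μ̄⁻¹g}(x − μ̄⁻¹∇f(x)) with x ≠ x̄, supp(x) = supp(x̄) and supp(Bx) = supp(Bx̄). Let b₁ > 0, σ ∈ (0,1/2), ς ∈ (σ,1], let G ∈ ℝ^{n×n} be symmetric with G ⪰ b₁‖μ̄(x − x̄)‖^σ I, set Π := Π(x), Θ(y) := f(x) + ⟨∇f(x), y − x⟩ + (1/2)⟨y − x, G(y − x)⟩ + δ_Π(y), let ŷ be the unique minimizer of Θ, and define R(y) := μ̄[y − proj_Π(y − μ̄⁻¹(G(y − x) + ∇f(x)))]. Then there exists δ > 0 such that for every y ∈ ℝⁿ with ‖y − ŷ‖ < δ, the point y′ := y − μ̄⁻¹R(y) (which lies in Π) satisfies Θ(y′) ≤ Θ(x) and dist(0, ∂Θ(y′)) ≤ (min{μ̄⁻¹, 1}/2) · min{‖μ̄(x − x̄)‖, ‖μ̄(x − x̄)‖^{1+ς}}, where for z ∈ Π, ∂Θ(z) := ∇f(x) + G(z − x) + N_Π(z). -/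

import Mathlib

open scoped Classical

noncomputable section

/-- Identity reinterpretation of a coordinate vector as a point of Euclidean space. -/
def toEuc {n : ℕ} (v : Fin n → ℝ) : EuclideanSpace ℝ (Fin n) := WithLp.toLp 2 v

/-- The box `Ω = {x : l ≤ x ≤ u}` in ℝⁿ. -/
def Om {n : ℕ} (l u : Fin n → ℝ) : Set (EuclideanSpace ℝ (Fin n)) :=
  {x | ∀ i, l i ≤ x i ∧ x i ≤ u i}

/-- The ℓ₀-norm (number of nonzero entries) of a vector. -/
def zeroNorm {m : ℕ} (v : Fin m → ℝ) : ℕ := (Function.support v).ncard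

/-- `prox_{μ⁻¹ g}(z)`: the set of minimizers of `(μ/2)‖·−z‖² + λ₁‖B·‖₀ + λ₂‖·‖₀` over Ω. -/
def proxSet {n p : ℕ} (B : Matrix (Fin p) (Fin n) ℝ) (lam1 lam2 : ℝ) (l u : Fin n → ℝ)
    (μ : ℝ) (z : EuclideanSpace ℝ (Fin n)) : Set (EuclideanSpace ℝ (Fin n)) :=
  {x | x ∈ Om l u ∧ ∀ y ∈ Om l u,
    μ / 2 * ‖x - z‖ ^ 2 + lam1 * (zeroNorm (B.mulVec x) : ℝ) + lam2 * (zeroNorm x : ℝ) ≤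
    μ / 2 * ‖y - z‖ ^ 2 + lam1 * (zeroNorm (B.mulVec y) : ℝ) + lam2 * (zeroNorm y : ℝ)}

/-- `Π(z) = {x ∈ Ω : supp(x) ⊆ supp(z), supp(Bx) ⊆ supp(Bz)}`. -/
def PiSet {n p : ℕ} (B : Matrix (Fin p) (Fin n) ℝ) (l u : Fin n → ℝ)
    (z : EuclideanSpace ℝ (Fin n)) : Set (EuclideanSpace ℝ (Fin n)) :=
  {x | x ∈ Om l u ∧ Function.support x ⊆ Function.support z ∧
    Function.support (B.mulVec x) ⊆ Function.support (B.mulVec z)}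

/-- Normal cone of a convex set `S` at `x`. -/
def normalCone {n : ℕ} (S : Set (EuclideanSpace ℝ (Fin n)))
    (x : EuclideanSpace ℝ (Fin n)) : Set (EuclideanSpace ℝ (Fin n)) :=
  {v | ∀ y ∈ S, (inner ℝ v (y - x) : ℝ) ≤ 0}

/-- The Euclidean projection onto a (nonempty closed convex) set `S`. -/
def projCC {n : ℕ} (S : Set (EuclideanSpace ℝ (Fin n))) (w : EuclideanSpace ℝ (Fin n)) :
    EuclideanSpace ℝ (Fin n) :=
  Classical.epsilon (fun y => y ∈ S ∧ ∀ z ∈ S, ‖y - w‖ ≤ ‖z - w‖)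

/-- `Θ(y) = f(x) + ⟨∇f(x), y−x⟩ + (1/2)⟨y−x, G(y−x)⟩ + δ_{Π(x)}(y)`. -/
def ThetaFun {n p : ℕ} (B : Matrix (Fin p) (Fin n) ℝ) (l u : Fin n → ℝ)
    (f : EuclideanSpace ℝ (Fin n) → ℝ) (G : Matrix (Fin n) (Fin n) ℝ)
    (x y : EuclideanSpace ℝ (Fin n)) : EReal :=
  if y ∈ PiSet B l u x then
    ((f x + (inner ℝ (gradient f x) (y - x) : ℝ)
      + (1 : ℝ) / 2 * (inner ℝ (y - x) ((WithLp.toLp 2 (G.mulVec (y - x)) : EuclideanSpace ℝ (Fin n))) : ℝ) : ℝ)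
      : EReal)
  else ⊤

open scoped RealInnerProductSpace
open Filter Topology Set Function

/-! Comparing `x̄` with `x` in the prox problem (the `ℓ₀` terms agree by the support
hypotheses) gives `⟪∇f(x), x̄ - x⟫ < 0`, so `x` does not minimize the quadratic model on the
convex set `Π`, and `Θ(ŷ) < Θ(x)`. By first-order optimality `ŷ` is a fixed point of the
continuous map `y ↦ y' = proj_Π(y - μ̄⁻¹(G(y - x) + ∇f(x)))`. The projection inequality puts
`μ̄(y - y') - G(y - y')` into `∂Θ(y')`; this residual vanishes at `ŷ` and `Θ(y') - Θ(x)` is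
negative there, so by continuity both bounds hold near `ŷ`. -/

lemma nonneg_of_forall_mul_add_sq_mul_nonneg {a b : ℝ}
    (h : ∀ t : ℝ, 0 < t → t ≤ 1 → 0 ≤ t * a + t ^ 2 * b) : 0 ≤ a := by
  have hlim : Tendsto (fun t : ℝ => a + t * b) (𝓝[>] 0) (𝓝 a) := by
    have : Continuous fun t : ℝ => a + t * b := by fun_prop
    simpa using (this.tendsto 0).mono_left nhdsWithin_le_nhds
  refine ge_of_tendsto hlim ?_
  filter_upwards [Ioc_mem_nhdsGT (zero_lt_one' ℝ)] with t ⟨ht₀, ht₁⟩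
  refine nonneg_of_mul_nonneg_right ?_ ht₀
  linarith [h t ht₀ ht₁]

section InnerProductSpace

variable {E : Type*} [NormedAddCommGroup E] [InnerProductSpace ℝ E]

def quadModel (c : ℝ) (g : E) (A : E →ₗ[ℝ] E) (x y : E) : ℝ :=
  c + ⟪g, y - x⟫ + 1 / 2 * ⟪y - x, A (y - x)⟫

variable {c : ℝ} {g x : E} {A : E →ₗ[ℝ] E}

@[simp]
lemma quadModel_self : quadModel c g A x x = c := by
  simp [quadModel]

lemma quadModel_add_smul (hA : A.IsSymmetric) (w e : E) (t : ℝ) :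
    quadModel c g A x (w + t • e) =
      quadModel c g A x w + t * ⟪g + A (w - x), e⟫ + t ^ 2 * (1 / 2 * ⟪e, A e⟫) := by
  have hwe : w + t • e - x = (w - x) + t • e := by abel
  simp only [quadModel, hwe, inner_add_right, inner_add_left, map_add, map_smul,
    real_inner_smul_left, real_inner_smul_right]
  rw [← hA (w - x) e, real_inner_comm (A (w - x)) e]
  ring

lemma inner_add_map_sub_nonneg_of_isMinOn (hA : A.IsSymmetric) {S : Set E} (hS : Convex ℝ S)
    {w z : E} (hw : w ∈ S) (hz : z ∈ S) (hmin : IsMinOn (quadModel c g A x) S w) :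
    0 ≤ ⟪g + A (w - x), z - w⟫ := by
  refine nonneg_of_forall_mul_add_sq_mul_nonneg (b := 1 / 2 * ⟪z - w, A (z - w)⟫)
    fun t ht₀ ht₁ => ?_
  have hmem : w + t • (z - w) ∈ S := hS.add_smul_sub_mem hw hz ⟨ht₀.le, ht₁⟩
  have : quadModel c g A x w ≤ quadModel c g A x (w + t • (z - w)) := hmin hmem
  rw [quadModel_add_smul hA] at this
  linarith

lemma exists_quadModel_lt_of_inner_neg (hA : A.IsSymmetric) {S : Set E} (hS : Convex ℝ S)
    {z : E} (hx : x ∈ S) (hz : z ∈ S) (h : ⟪g, z - x⟫ < 0) :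
    ∃ y ∈ S, quadModel c g A x y < c := by
  by_contra! hge
  have hmin : IsMinOn (quadModel c g A x) S x := fun y hy => by simpa using hge y hy
  have := inner_add_map_sub_nonneg_of_isMinOn hA hS hx hz hmin
  simp only [sub_self, map_zero, add_zero] at this
  linarith

lemma norm_sub_le_of_inner_sub_nonpos {w₁ w₂ p₁ p₂ : E}
    (h₁ : ⟪w₁ - p₁, p₂ - p₁⟫ ≤ 0) (h₂ : ⟪w₂ - p₂, p₁ - p₂⟫ ≤ 0) :
    ‖p₁ - p₂‖ ≤ ‖w₁ - w₂‖ := by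
  have hsq : ‖p₁ - p₂‖ ^ 2 ≤ ‖w₁ - w₂‖ * ‖p₁ - p₂‖ :=
    calc ‖p₁ - p₂‖ ^ 2 = ⟪w₁ - w₂, p₁ - p₂⟫ + ⟪w₁ - p₁, p₂ - p₁⟫ + ⟪w₂ - p₂, p₁ - p₂⟫ := by
          rw [← real_inner_self_eq_norm_sq, ← neg_sub p₁ p₂, inner_neg_right, ← sub_eq_add_neg,
            ← inner_sub_left, ← inner_add_left]
          congr 1; abel
      _ ≤ ⟪w₁ - w₂, p₁ - p₂⟫ := by linarith
      _ ≤ ‖w₁ - w₂‖ * ‖p₁ - p₂‖ := real_inner_le_norm _ _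
  nlinarith [norm_nonneg (p₁ - p₂), norm_nonneg (w₁ - w₂)]

lemma inner_sub_neg_of_norm_sub_le {μ : ℝ} {x' : E} (hμ : 0 < μ) (hne : x ≠ x')
    (h : ‖x' - (x - μ⁻¹ • g)‖ ≤ ‖x - (x - μ⁻¹ • g)‖) : ⟪g, x' - x⟫ < 0 := by
  have hd : 0 < ‖x' - x‖ := norm_pos_iff.2 (sub_ne_zero.2 hne.symm)
  have hsq := pow_le_pow_left₀ (norm_nonneg _) h 2
  rw [show x' - (x - μ⁻¹ • g) = (x' - x) + μ⁻¹ • g by abel, sub_sub_cancel, norm_add_sq_real,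
    real_inner_smul_right, real_inner_comm] at hsq
  have : 0 < μ⁻¹ := inv_pos.2 hμ
  nlinarith

end InnerProductSpace

section Projection

variable {n : ℕ} {S : Set (EuclideanSpace ℝ (Fin n))}

lemma projCC_spec (hne : S.Nonempty) (hS : IsClosed S) (hconv : Convex ℝ S)
    (w : EuclideanSpace ℝ (Fin n)) :
    projCC S w ∈ S ∧ ∀ z ∈ S, ‖projCC S w - w‖ ≤ ‖z - w‖ := by
  obtain ⟨v, hv, hvmin⟩ := exists_norm_eq_iInf_of_complete_convex hne hS.isComplete hconv w
  refine Classical.epsilon_spec (p := fun y => y ∈ S ∧ ∀ z ∈ S, ‖y - w‖ ≤ ‖z - w‖)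
    ⟨v, hv, fun z hz => ?_⟩
  rw [norm_sub_rev, hvmin, norm_sub_rev]
  exact ciInf_le ⟨0, forall_mem_range.2 fun _ => norm_nonneg _⟩ (⟨z, hz⟩ : S)

lemma projCC_mem (hne : S.Nonempty) (hS : IsClosed S) (hconv : Convex ℝ S)
    (w : EuclideanSpace ℝ (Fin n)) : projCC S w ∈ S :=
  (projCC_spec hne hS hconv w).1

lemma inner_sub_projCC_nonpos (hne : S.Nonempty) (hS : IsClosed S) (hconv : Convex ℝ S)
    (w : EuclideanSpace ℝ (Fin n)) {z : EuclideanSpace ℝ (Fin n)} (hz : z ∈ S) :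
    ⟪w - projCC S w, z - projCC S w⟫ ≤ 0 := by
  obtain ⟨hmem, hmin⟩ := projCC_spec hne hS hconv w
  have : Nonempty S := hne.to_subtype
  refine (norm_eq_iInf_iff_real_inner_le_zero hconv hmem).1 (le_antisymm ?_ ?_) z hz
  · exact le_ciInf fun y => by rw [norm_sub_rev, norm_sub_rev w]; exact hmin y y.2
  · exact ciInf_le ⟨0, forall_mem_range.2 fun _ => norm_nonneg _⟩ (⟨_, hmem⟩ : S)

lemma projCC_eq_of_inner_sub_nonpos (hne : S.Nonempty) (hS : IsClosed S) (hconv : Convex ℝ S)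
    {w y : EuclideanSpace ℝ (Fin n)} (hy : y ∈ S) (h : ∀ z ∈ S, ⟪w - y, z - y⟫ ≤ 0) :
    projCC S w = y := by
  have := norm_sub_le_of_inner_sub_nonpos (inner_sub_projCC_nonpos hne hS hconv w hy)
    (h _ (projCC_mem hne hS hconv w))
  rwa [sub_self, norm_zero, norm_le_zero_iff, sub_eq_zero] at this

lemma lipschitzWith_one_projCC (hne : S.Nonempty) (hS : IsClosed S) (hconv : Convex ℝ S) :
    LipschitzWith 1 (projCC S) :=
  LipschitzWith.of_dist_le_mul fun w₁ w₂ => by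
    simpa [dist_eq_norm] using norm_sub_le_of_inner_sub_nonpos
      (inner_sub_projCC_nonpos hne hS hconv w₁ (projCC_mem hne hS hconv w₂))
      (inner_sub_projCC_nonpos hne hS hconv w₂ (projCC_mem hne hS hconv w₁))

lemma smul_sub_projCC_mem_normalCone (hne : S.Nonempty) (hS : IsClosed S)
    (hconv : Convex ℝ S) {μ : ℝ} (hμ : 0 ≤ μ) (w : EuclideanSpace ℝ (Fin n)) :
    μ • (w - projCC S w) ∈ normalCone S (projCC S w) := fun z hz => by
  rw [real_inner_smul_left]
  exact mul_nonpos_of_nonneg_of_nonpos hμ (inner_sub_projCC_nonpos hne hS hconv w hz)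

end Projection

lemma isClosed_setOf_support_subset {X ι : Type*} [TopologicalSpace X] {F : X → ι → ℝ}
    (hF : Continuous F) (s : Set ι) : IsClosed {y | support (F y) ⊆ s} := by
  simp only [support_subset_iff', ofPred_forall]
  exact isClosed_iInter fun i => isClosed_iInter fun _ =>
    isClosed_eq ((continuous_apply i).comp hF) continuous_const

lemma convex_setOf_support_subset {E ι : Type*} [AddCommGroup E] [Module ℝ E]
    (F : E →ₗ[ℝ] ι → ℝ) (s : Set ι) : Convex ℝ {y | support (F y) ⊆ s} := by
  intro y hy z hz a b _ _ _
  simp only [mem_ofPred_eq, support_subset_iff'] at hy hz ⊢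
  intro i hi
  simp [hy i hi, hz i hi]

section BoxSupport

variable {n p : ℕ} (B : Matrix (Fin p) (Fin n) ℝ) (l u : Fin n → ℝ)

lemma Om_eq_preimage_Icc : Om l u = WithLp.ofLp ⁻¹' Icc l u := by
  ext x
  simp [Om, Pi.le_def, forall_and]

lemma isClosed_Om : IsClosed (Om l u) := by
  rw [Om_eq_preimage_Icc]
  exact isClosed_Icc.preimage (PiLp.continuous_ofLp 2 _)

lemma convex_Om : Convex ℝ (Om l u) := by
  rw [Om_eq_preimage_Icc]
  exact (convex_Icc l u).linear_preimage (WithLp.linearEquiv 2 ℝ (Fin n → ℝ)).toLinearMap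

lemma isClosed_PiSet (z : EuclideanSpace ℝ (Fin n)) : IsClosed (PiSet B l u z) :=
  (isClosed_Om l u).inter <|
    (isClosed_setOf_support_subset (PiLp.continuous_ofLp 2 _) _).inter
      (isClosed_setOf_support_subset (by fun_prop) _)

lemma convex_PiSet (z : EuclideanSpace ℝ (Fin n)) : Convex ℝ (PiSet B l u z) :=
  (convex_Om l u).inter <|
    (convex_setOf_support_subset (WithLp.linearEquiv 2 ℝ (Fin n → ℝ)).toLinearMap _).inter
      (convex_setOf_support_subset
        (B.mulVecLin ∘ₗ (WithLp.linearEquiv 2 ℝ (Fin n → ℝ)).toLinearMap) _)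

variable {B l u}

lemma self_mem_PiSet {x : EuclideanSpace ℝ (Fin n)} (hx : x ∈ Om l u) : x ∈ PiSet B l u x :=
  ⟨hx, subset_rfl, subset_rfl⟩

lemma mem_PiSet_of_support_eq {x x' : EuclideanSpace ℝ (Fin n)} (hx' : x' ∈ Om l u)
    (hsupp : support x = support x') (hsuppB : support (B.mulVec x) = support (B.mulVec x')) :
    x' ∈ PiSet B l u x :=
  ⟨hx', hsupp.symm.subset, hsuppB.symm.subset⟩

lemma norm_sub_le_of_mem_proxSet {lam1 lam2 μ : ℝ} (hμ : 0 < μ)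
    {x x' z : EuclideanSpace ℝ (Fin n)} (hx' : x' ∈ proxSet B lam1 lam2 l u μ z)
    (hx : x ∈ Om l u) (hsupp : support x = support x')
    (hsuppB : support (B.mulVec x) = support (B.mulVec x')) : ‖x' - z‖ ≤ ‖x - z‖ := by
  have h := hx'.2 x hx
  simp only [zeroNorm, hsupp, hsuppB, add_le_add_iff_right] at h
  exact (pow_le_pow_iff_left₀ (norm_nonneg _) (norm_nonneg _) two_ne_zero).1
    (le_of_mul_le_mul_left h (half_pos hμ))

lemma ThetaFun_of_mem {f : EuclideanSpace ℝ (Fin n) → ℝ} {G : Matrix (Fin n) (Fin n) ℝ}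
    {x y : EuclideanSpace ℝ (Fin n)} (hy : y ∈ PiSet B l u x) :
    ThetaFun B l u f G x y = quadModel (f x) (gradient f x) G.toEuclideanLin x y := by
  rw [ThetaFun, if_pos hy]
  rfl

lemma isMinOn_of_forall_ThetaFun_le {f : EuclideanSpace ℝ (Fin n) → ℝ}
    {G : Matrix (Fin n) (Fin n) ℝ} {x y : EuclideanSpace ℝ (Fin n)} (hy : y ∈ PiSet B l u x)
    (hmin : ∀ w, ThetaFun B l u f G x y ≤ ThetaFun B l u f G x w) :
    IsMinOn (quadModel (f x) (gradient f x) G.toEuclideanLin x) (PiSet B l u x) y :=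
  fun w hw => by
    have := hmin w
    rwa [ThetaFun_of_mem hy, ThetaFun_of_mem hw, EReal.coe_le_coe_iff] at this

end BoxSupport

section ProjectedStep

variable {n : ℕ} {S : Set (EuclideanSpace ℝ (Fin n))} {μ c : ℝ}
  {g x : EuclideanSpace ℝ (Fin n)} {A : EuclideanSpace ℝ (Fin n) →ₗ[ℝ] EuclideanSpace ℝ (Fin n)}

def projStep (S : Set (EuclideanSpace ℝ (Fin n))) (μ : ℝ) (g : EuclideanSpace ℝ (Fin n))
    (A : EuclideanSpace ℝ (Fin n) →ₗ[ℝ] EuclideanSpace ℝ (Fin n))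
    (x y : EuclideanSpace ℝ (Fin n)) : EuclideanSpace ℝ (Fin n) :=
  projCC S (y - μ⁻¹ • (A (y - x) + g))

lemma projStep_mem (hne : S.Nonempty) (hS : IsClosed S) (hconv : Convex ℝ S)
    (y : EuclideanSpace ℝ (Fin n)) : projStep S μ g A x y ∈ S :=
  projCC_mem hne hS hconv _

lemma continuous_projStep (hne : S.Nonempty) (hS : IsClosed S) (hconv : Convex ℝ S) :
    Continuous (projStep S μ g A x) := by
  have : Continuous A := A.continuous_of_finiteDimensional
  exact (lipschitzWith_one_projCC hne hS hconv).continuous.comp (by fun_prop)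

lemma projStep_eq_self_of_isMinOn (hμ : 0 < μ) (hA : A.IsSymmetric) (hS : IsClosed S)
    (hconv : Convex ℝ S) {y : EuclideanSpace ℝ (Fin n)} (hy : y ∈ S)
    (hmin : IsMinOn (quadModel c g A x) S y) : projStep S μ g A x y = y :=
  projCC_eq_of_inner_sub_nonpos ⟨y, hy⟩ hS hconv hy fun z hz => by
    rw [sub_sub_cancel_left, inner_neg_left, real_inner_smul_left, add_comm, neg_nonpos]
    exact mul_nonneg (inv_nonneg.2 hμ.le)
      (inner_add_map_sub_nonneg_of_isMinOn hA hconv hy hz hmin)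

lemma infDist_zero_subdifferential_le (hμ : 0 < μ) (hne : S.Nonempty) (hS : IsClosed S)
    (hconv : Convex ℝ S) (y : EuclideanSpace ℝ (Fin n)) :
    Metric.infDist 0 {v | ∃ w ∈ normalCone S (projStep S μ g A x y),
        v = g + A (projStep S μ g A x y - x) + w} ≤
      ‖μ • (y - projStep S μ g A x y) - A (y - projStep S μ g A x y)‖ := by
  set y' := projStep S μ g A x y
  have hw := smul_sub_projCC_mem_normalCone hne hS hconv hμ.le (y - μ⁻¹ • (A (y - x) + g))
  have hmem : g + A (y' - x) + μ • (y - μ⁻¹ • (A (y - x) + g) - y') ∈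
      {v | ∃ w ∈ normalCone S y', v = g + A (y' - x) + w} := ⟨_, hw, rfl⟩
  refine (Metric.infDist_le_dist_of_mem hmem).trans_eq ?_
  rw [dist_zero_left]
  congr 1
  have hAsub : A (y - y') = A (y - x) - A (y' - x) := by
    rw [← map_sub, sub_sub_sub_cancel_right]
  rw [sub_right_comm, smul_sub, smul_smul, mul_inv_cancel₀ hμ.ne', one_smul, hAsub]
  abel

lemma eventually_quadModel_projStep_lt (hμ : 0 < μ) (hA : A.IsSymmetric) (hS : IsClosed S)
    (hconv : Convex ℝ S) {ŷ : EuclideanSpace ℝ (Fin n)} (hŷ : ŷ ∈ S)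
    (hmin : IsMinOn (quadModel c g A x) S ŷ) {c' ε : ℝ} (hc' : quadModel c g A x ŷ < c')
    (hε : 0 < ε) :
    ∀ᶠ y in 𝓝 ŷ, quadModel c g A x (projStep S μ g A x y) < c' ∧
      ‖μ • (y - projStep S μ g A x y) - A (y - projStep S μ g A x y)‖ < ε := by
  have hA_cont : Continuous A := A.continuous_of_finiteDimensional
  have hP := continuous_projStep (μ := μ) (g := g) (A := A) (x := x) ⟨ŷ, hŷ⟩ hS hconv
  have hfix := projStep_eq_self_of_isMinOn hμ hA hS hconv hŷ hmin
  have hq : Continuous (quadModel c g A x) := by unfold quadModel; fun_prop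
  refine ((hq.comp hP).continuousAt.eventually_lt continuousAt_const ?_).and
    (ContinuousAt.eventually_lt (by fun_prop) continuousAt_const ?_)
  · simpa [hfix] using hc'
  · simpa [hfix] using hε

end ProjectedStep

theorem stmt10_general {n p : ℕ} (B : Matrix (Fin p) (Fin n) ℝ) (lam1 lam2 : ℝ)
    (l u : Fin n → ℝ)
    (f : EuclideanSpace ℝ (Fin n) → ℝ)
    (x : EuclideanSpace ℝ (Fin n)) (hx : x ∈ Om l u)
    (mubar : ℝ) (hmubar : 0 < mubar)
    (xbar : EuclideanSpace ℝ (Fin n))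
    (hxbar : xbar ∈ proxSet B lam1 lam2 l u mubar (x - mubar⁻¹ • gradient f x))
    (hne : x ≠ xbar)
    (hsupp : Function.support x = Function.support xbar)
    (hsuppB : Function.support (B.mulVec x) = Function.support (B.mulVec xbar))
    (ς : ℝ)
    (G : Matrix (Fin n) (Fin n) ℝ) (hGsym : G.IsSymm)
    (R : EuclideanSpace ℝ (Fin n) → EuclideanSpace ℝ (Fin n))
    (hR : ∀ y, R y = mubar • (y - projCC (PiSet B l u x)
      (y - mubar⁻¹ • (toEuc (G.mulVec (y - x)) + gradient f x))))
    (yhat : EuclideanSpace ℝ (Fin n)) (hyhatmem : yhat ∈ PiSet B l u x)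
    (hyhat : ∀ w : EuclideanSpace ℝ (Fin n), ThetaFun B l u f G x yhat ≤ ThetaFun B l u f G x w) :
    ∃ δ > (0 : ℝ), ∀ y : EuclideanSpace ℝ (Fin n), ‖y - yhat‖ < δ →
      ∀ y' : EuclideanSpace ℝ (Fin n), y' = y - mubar⁻¹ • R y →
        y' ∈ PiSet B l u x ∧
        ThetaFun B l u f G x y' ≤ ThetaFun B l u f G x x ∧
        Metric.infDist (0 : EuclideanSpace ℝ (Fin n))
            {v | ∃ w ∈ normalCone (PiSet B l u x) y',
              v = gradient f x + toEuc (G.mulVec (y' - x)) + w} ≤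
          min mubar⁻¹ 1 / 2 *
            min ‖mubar • (x - xbar)‖ (‖mubar • (x - xbar)‖ ^ (1 + ς)) := by
  set S := PiSet B l u x
  set A := G.toEuclideanLin
  have hA : A.IsSymmetric := Matrix.isSymmetric_toEuclideanLin_iff.2 (by simpa using hGsym)
  have hS := isClosed_PiSet B l u x
  have hconv := convex_PiSet B l u x
  have hSne : S.Nonempty := ⟨x, self_mem_PiSet hx⟩
  have hmin := isMinOn_of_forall_ThetaFun_le hyhatmem hyhat
  obtain ⟨z, hz, hqz⟩ := exists_quadModel_lt_of_inner_neg (c := f x) hA hconv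
    (self_mem_PiSet hx) (mem_PiSet_of_support_eq hxbar.1 hsupp hsuppB)
    (inner_sub_neg_of_norm_sub_le hmubar hne
      (norm_sub_le_of_mem_proxSet hmubar hxbar hx hsupp hsuppB))
  have hnorm_pos : 0 < ‖mubar • (x - xbar)‖ :=
    norm_pos_iff.2 (smul_ne_zero hmubar.ne' (sub_ne_zero.2 hne))
  obtain ⟨δ, hδ, hball⟩ := Metric.eventually_nhds_iff.1 <|
    eventually_quadModel_projStep_lt hmubar hA hS hconv hyhatmem hmin ((hmin hz).trans_lt hqz)
      (by positivity : 0 < min mubar⁻¹ 1 / 2 *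
        min ‖mubar • (x - xbar)‖ (‖mubar • (x - xbar)‖ ^ (1 + ς)))
  refine ⟨δ, hδ, fun y hy y' hy' => ?_⟩
  obtain rfl : y' = projStep S mubar (gradient f x) A x y := by
    rw [hy', hR, smul_smul, inv_mul_cancel₀ hmubar.ne', one_smul, sub_sub_cancel]
    rfl
  obtain ⟨hq, hres⟩ := hball (by rwa [dist_eq_norm])
  have hy'S := projStep_mem (μ := mubar) (g := gradient f x) (A := A) (x := x) hSne hS hconv y
  refine ⟨hy'S, ?_, (infDist_zero_subdifferential_le hmubar hSne hS hconv y).trans hres.le⟩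
  rw [ThetaFun_of_mem hy'S, ThetaFun_of_mem (self_mem_PiSet hx), quadModel_self]
  exact_mod_cast hq.le

/-- near the unique minimizer `ŷ` of the projected regularized Newton
subproblem, the point `y′ = y − μ̄⁻¹R(y)` (which lies in `Π = Π(x)`) satisfies the two
inexactness criteria `Θ(y′) ≤ Θ(x)` and
`dist(0, ∂Θ(y′)) ≤ (min{μ̄⁻¹,1}/2)·min{‖μ̄(x−x̄)‖, ‖μ̄(x−x̄)‖^{1+ς}}`,
where `R(y) = μ̄[y − proj_Π(y − μ̄⁻¹(G(y−x) + ∇f(x)))]` and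
`∂Θ(z) = ∇f(x) + G(z−x) + N_Π(z)`. -/
theorem stmt10 {n p : ℕ} (B : Matrix (Fin p) (Fin n) ℝ) (lam1 lam2 : ℝ)
    (hlam1 : 0 < lam1) (hlam2 : 0 < lam2)
    (l u : Fin n → ℝ) (hl : ∀ i, l i ≤ 0) (hu : ∀ i, 0 ≤ u i)
    (f : EuclideanSpace ℝ (Fin n) → ℝ) (hf : Differentiable ℝ f)
    (x : EuclideanSpace ℝ (Fin n)) (hx : x ∈ Om l u)
    (mubar : ℝ) (hmubar : 0 < mubar)
    (xbar : EuclideanSpace ℝ (Fin n))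
    (hxbar : xbar ∈ proxSet B lam1 lam2 l u mubar (x - mubar⁻¹ • gradient f x))
    (hne : x ≠ xbar)
    (hsupp : Function.support x = Function.support xbar)
    (hsuppB : Function.support (B.mulVec x) = Function.support (B.mulVec xbar))
    (b1 σ ς : ℝ) (hb1 : 0 < b1) (hσ : 0 < σ ∧ σ < 1 / 2) (hς : σ < ς ∧ ς ≤ 1)
    (G : Matrix (Fin n) (Fin n) ℝ) (hGsym : G.IsSymm)
    (hG : (G - (b1 * ‖mubar • (x - xbar)‖ ^ σ) • (1 : Matrix (Fin n) (Fin n) ℝ)).PosSemidef)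
    (R : EuclideanSpace ℝ (Fin n) → EuclideanSpace ℝ (Fin n))
    (hR : ∀ y, R y = mubar • (y - projCC (PiSet B l u x)
      (y - mubar⁻¹ • (toEuc (G.mulVec (y - x)) + gradient f x))))
    (yhat : EuclideanSpace ℝ (Fin n)) (hyhatmem : yhat ∈ PiSet B l u x)
    (hyhat : ∀ w : EuclideanSpace ℝ (Fin n), ThetaFun B l u f G x yhat ≤ ThetaFun B l u f G x w) :
    ∃ δ > (0 : ℝ), ∀ y : EuclideanSpace ℝ (Fin n), ‖y - yhat‖ < δ →
      ∀ y' : EuclideanSpace ℝ (Fin n), y' = y - mubar⁻¹ • R y →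
        y' ∈ PiSet B l u x ∧
        ThetaFun B l u f G x y' ≤ ThetaFun B l u f G x x ∧
        Metric.infDist (0 : EuclideanSpace ℝ (Fin n))
            {v | ∃ w ∈ normalCone (PiSet B l u x) y',
              v = gradient f x + toEuc (G.mulVec (y' - x)) + w} ≤
          min mubar⁻¹ 1 / 2 *
            min ‖mubar • (x - xbar)‖ (‖mubar • (x - xbar)‖ ^ (1 + ς)) :=
  stmt10_general B lam1 lam2 l u f x hx mubar hmubar xbar hxbar hne hsupp hsuppB ς G hGsym R hR yhat
    hyhatmem hyhat
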